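/- For every real m > 1, the function φ_m : \overline\nabla_\infty → ℝ defined by φ_m(x) := ∑_{i=1}^∞ x_i^m is continuous on \overline\nabla_\infty with respect to the product topology (the series converges for every x ∈ \overline\nabla_\infty, with ∑_{i>N} x_i^m ≤ (N+1)^{-(m-1)} for every N). -/

import Mathlib

/-!
Monotonicity and `∑ xᵢ ≤ 1` force `(i + 1) xᵢ ≤ 1`, so `xᵢ ^ m ≤ (i + 1) ^ (-m)` on the whole
simplex. This summable majorant does not depend on `x`, so by the Weierstrass M-test the partial
sums, each continuous in the product topology, converge uniformly on the simplex. For the tail,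
`xᵢ ≤ x_N ≤ (N + 1)⁻¹` when `i ≥ N` gives `xᵢ ^ m ≤ (N + 1) ^ (-(m - 1)) xᵢ`, and `∑ xᵢ ≤ 1`.
-/

open Real

def KingmanSimplex : Set (ℕ → ℝ) :=
  {x | (∀ i, x (i + 1) ≤ x i) ∧ (∀ i, 0 ≤ x i) ∧ Summable x ∧ ∑' i, x i ≤ 1}

theorem Antitone.succ_mul_le_tsum {x : ℕ → ℝ} (hx : Antitone x) (h0 : ∀ i, 0 ≤ x i)
    (hs : Summable x) (n : ℕ) : ((n : ℝ) + 1) * x n ≤ ∑' i, x i :=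
  calc ((n : ℝ) + 1) * x n = (Finset.range (n + 1)).card • x n := by simp
    _ ≤ ∑ i ∈ Finset.range (n + 1), x i :=
      Finset.card_nsmul_le_sum _ _ _ fun _ hi => hx (Finset.mem_range_succ_iff.mp hi)
    _ ≤ ∑' i, x i := hs.sum_le_tsum _ fun i _ => h0 i

theorem Real.rpow_le_rpow_neg_of_le_inv {a b p : ℝ} (ha : 0 ≤ a) (hb : 0 < b) (hab : a ≤ b⁻¹)
    (hp : 0 ≤ p) : a ^ p ≤ b ^ (-p) := by
  rw [rpow_neg hb.le, ← inv_rpow hb.le]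
  exact rpow_le_rpow ha hab hp

theorem Real.summable_nat_add_one_rpow_neg {m : ℝ} (hm : 1 < m) :
    Summable fun i : ℕ => ((i : ℝ) + 1) ^ (-m) := by
  simpa using (summable_nat_add_iff 1).mpr (summable_nat_rpow.mpr (neg_lt_neg hm))

namespace KingmanSimplex

variable {x : ℕ → ℝ}

theorem antitone (hx : x ∈ KingmanSimplex) : Antitone x := antitone_nat_of_succ_le hx.1

theorem nonneg (hx : x ∈ KingmanSimplex) (i : ℕ) : 0 ≤ x i := hx.2.1 i

theorem le_inv_succ (hx : x ∈ KingmanSimplex) (i : ℕ) : x i ≤ ((i : ℝ) + 1)⁻¹ := by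
  rw [← one_div, le_div_iff₀ (by positivity), mul_comm]
  exact ((antitone hx).succ_mul_le_tsum (nonneg hx) hx.2.2.1 i).trans hx.2.2.2

theorem rpow_le (hx : x ∈ KingmanSimplex) {m : ℝ} (hm : 0 ≤ m) (i : ℕ) :
    x i ^ m ≤ ((i : ℝ) + 1) ^ (-m) :=
  rpow_le_rpow_neg_of_le_inv (nonneg hx i) (by positivity) (le_inv_succ hx i) hm

theorem summable_rpow (hx : x ∈ KingmanSimplex) {m : ℝ} (hm : 1 < m) :
    Summable fun i => x i ^ m :=
  (summable_nat_add_one_rpow_neg hm).of_nonneg_of_le (fun i => rpow_nonneg (nonneg hx i) m)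
    (rpow_le hx (by linarith))

theorem tsum_nat_add_le (hx : x ∈ KingmanSimplex) (N : ℕ) : ∑' i, x (N + i) ≤ 1 :=
  (tsum_comp_le_tsum_of_inj hx.2.2.1 (nonneg hx) (add_right_injective N)).trans hx.2.2.2

theorem tsum_nat_add_rpow_le (hx : x ∈ KingmanSimplex) {m : ℝ} (hm : 1 ≤ m) (N : ℕ) :
    ∑' i, x (N + i) ^ m ≤ ((N : ℝ) + 1) ^ (-(m - 1)) := by
  set c := ((N : ℝ) + 1) ^ (-(m - 1))
  have hc : 0 ≤ c := by positivity
  have hle : ∀ i, x (N + i) ^ m ≤ c * x (N + i) := fun i =>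
    have hxN : x (N + i) ≤ ((N : ℝ) + 1)⁻¹ :=
      (antitone hx (Nat.le_add_right N i)).trans (le_inv_succ hx N)
    calc x (N + i) ^ m = x (N + i) ^ (m - 1) * x (N + i) := by
          rw [← rpow_add_one' (nonneg hx _) (by linarith), sub_add_cancel]
      _ ≤ c * x (N + i) := mul_le_mul_of_nonneg_right
          (rpow_le_rpow_neg_of_le_inv (nonneg hx _) (by positivity) hxN (by linarith))
          (nonneg hx _)
  have hs : Summable fun i => c * x (N + i) :=
    (hx.2.2.1.comp_injective (add_right_injective N)).mul_left c
  calc ∑' i, x (N + i) ^ m ≤ ∑' i, c * x (N + i) :=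
        (hs.of_nonneg_of_le (fun i => rpow_nonneg (nonneg hx _) m) hle).tsum_le_tsum hle hs
    _ = c * ∑' i, x (N + i) := tsum_mul_left
    _ ≤ c := mul_le_of_le_one_right hc (tsum_nat_add_le hx N)

end KingmanSimplex

/-- `x` is 0-indexed, so `∑' i, x (N + i)` is the paper's tail `∑_{i>N}`. -/
theorem phi_m_continuousOn (m : ℝ) (hm : 1 < m) :
    (∀ x ∈ KingmanSimplex,
      Summable (fun i => x i ^ m) ∧
      ∀ N : ℕ, ∑' i : ℕ, x (N + i) ^ m ≤ ((N : ℝ) + 1) ^ (-(m - 1))) ∧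
    ContinuousOn (fun x : ℕ → ℝ => ∑' i, x i ^ m) KingmanSimplex := by
  refine ⟨fun x hx =>
    ⟨KingmanSimplex.summable_rpow hx hm, KingmanSimplex.tsum_nat_add_rpow_le hx hm.le⟩, ?_⟩
  refine continuousOn_tsum (fun i => ?_) (summable_nat_add_one_rpow_neg hm) fun i x hx => ?_
  · exact ((continuous_apply i).rpow_const fun _ => Or.inr (by linarith)).continuousOn
  · rw [norm_of_nonneg (rpow_nonneg (KingmanSimplex.nonneg hx i) m)]
    exact KingmanSimplex.rpow_le hx (by linarith) i
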